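/- arXiv:2502.09047 — 3 statements merged into one kernel-verified Lean document; each statement's English description precedes it below -/
import Mathlib

section
/- Let c ∈ [0,1), 0 ≤ δ ≤ q with q > cδ. Then for any k ≥ 1 and any μ_1, …, μ_k ∈ [0, (1−c)²/(q−cδ)], the product of momentum matrices satisfies ‖A(μ_1) A(μ_2) ⋯ A(μ_k)‖ ≤ 4/(1−c), where A(μ) = [[0, 1−δμ],[−c, 1+c−qμ]] and ‖·‖ is the spectral norm. -/
set_option maxHeartbeats 1000000
set_option synthInstance.maxHeartbeats 400000

open Matrix Real

noncomputable section

/-- The 2×2 momentum matrix `A(μ) = [[0, 1−δμ], [−c, 1+c−qμ]]`. -/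
def Amat (c δ q μ : ℝ) : Matrix (Fin 2) (Fin 2) ℝ :=
  !![0, 1 - δ * μ; -c, 1 + c - q * μ]

/-- The matrix spectral (operator 2-) norm. -/
def specNorm {d : ℕ} (A : Matrix (Fin d) (Fin d) ℝ) : ℝ :=
  ‖Matrix.toEuclideanCLM (𝕜 := ℝ) A‖

namespace MomAux

lemma specNorm_nonneg {d : ℕ} (A : Matrix (Fin d) (Fin d) ℝ) : 0 ≤ specNorm A :=
  norm_nonneg _

lemma specNorm_mul_le {d : ℕ} (A B : Matrix (Fin d) (Fin d) ℝ) :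
    specNorm (A * B) ≤ specNorm A * specNorm B := by
  unfold specNorm; rw [_root_.map_mul]; exact norm_mul_le _ _

lemma specNorm_one : specNorm (1 : Matrix (Fin 2) (Fin 2) ℝ) = 1 := by
  unfold specNorm; rw [_root_.map_one]; exact norm_one

lemma specNorm_smul (r : ℝ) (A : Matrix (Fin 2) (Fin 2) ℝ) :
    specNorm (r • A) = |r| * specNorm A := by
  unfold specNorm
  rw [_root_.map_smul, norm_smul r (Matrix.toEuclideanCLM (𝕜 := ℝ) A)]
  simp [Real.norm_eq_abs]

lemma specNorm_le_of_bound (M : Matrix (Fin 2) (Fin 2) ℝ) (C : ℝ) (hC : 0 ≤ C)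
    (h : ∀ x y : ℝ, (M 0 0 * x + M 0 1 * y)^2 + (M 1 0 * x + M 1 1 * y)^2
      ≤ C^2 * (x^2 + y^2)) :
    specNorm M ≤ C := by
  unfold specNorm
  apply ContinuousLinearMap.opNorm_le_bound _ hC
  intro x
  have hx : ∀ v : EuclideanSpace ℝ (Fin 2), ‖v‖ = Real.sqrt (v 0 ^ 2 + v 1 ^ 2) := by
    intro v
    rw [EuclideanSpace.norm_eq]
    simp [Fin.sum_univ_two, Real.norm_eq_abs, sq_abs]
  rw [hx, hx]
  have happ : ∀ i, (Matrix.toEuclideanCLM (𝕜 := ℝ) M x) i = (M.mulVec (fun j => x j)) i := by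
    intro i; rfl
  rw [happ, happ]
  have h0 : M.mulVec (fun j => x j) 0 = M 0 0 * x 0 + M 0 1 * x 1 := by
    simp [Matrix.mulVec, dotProduct, Fin.sum_univ_two]
  have h1 : M.mulVec (fun j => x j) 1 = M 1 0 * x 0 + M 1 1 * x 1 := by
    simp [Matrix.mulVec, dotProduct, Fin.sum_univ_two]
  rw [h0, h1]
  rw [show C * Real.sqrt (x 0 ^2 + x 1^2) = Real.sqrt (C^2 * (x 0^2 + x 1^2)) by
    rw [Real.sqrt_mul (by positivity), Real.sqrt_sq hC]]
  exact Real.sqrt_le_sqrt (h (x 0) (x 1))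

lemma quad_nonneg (E F G x y : ℝ) (hE : 0 ≤ E) (hG : 0 ≤ G) (h : F^2 ≤ E*G) :
    0 ≤ E*x^2 + 2*F*x*y + G*y^2 := by
  rcases eq_or_lt_of_le hE with hE0 | hEpos
  · have hF : F = 0 := by nlinarith [sq_nonneg F]
    rw [hF, ← hE0]
    have := mul_nonneg hG (sq_nonneg y)
    nlinarith
  · nlinarith [sq_nonneg (E*x + F*y),
      mul_nonneg (by nlinarith : (0:ℝ) ≤ E*G - F^2) (sq_nonneg y)]

/-- The transformed factor `B = [[1−a, −ca],[b, c(1+b)]]` has spectral norm at most 1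
whenever `0 ≤ b ≤ a ≤ 1 − c` and `0 ≤ c`. -/
lemma Bmat_norm_le (a b c : ℝ) (hc0 : 0 ≤ c) (hb0 : 0 ≤ b) (hba : b ≤ a) (hac : a ≤ 1 - c) :
    specNorm !![1 - a, -(c*a); b, c*(1+b)] ≤ 1 := by
  have hc1 : c ≤ 1 := by linarith
  have ha0 : 0 ≤ a := le_trans hb0 hba
  have ha1 : a ≤ 1 := by linarith
  apply specNorm_le_of_bound _ _ zero_le_one
  intro x y
  have hE : (0:ℝ) ≤ 1 - (1-a)^2 - b^2 := by
    have : b^2 ≤ a^2 := by nlinarith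
    nlinarith
  have hG : (0:ℝ) ≤ 1 - (c*a)^2 - (c*(1+b))^2 := by
    have hb1 : 1 + b ≤ 2 - c := by linarith
    have h1 : (c*a)^2 ≤ (c*(1-c))^2 :=
      pow_le_pow_left₀ (mul_nonneg hc0 ha0) (mul_le_mul_of_nonneg_left hac hc0) 2
    have h2 : (c*(1+b))^2 ≤ (c*(2-c))^2 :=
      pow_le_pow_left₀ (mul_nonneg hc0 (by linarith)) (mul_le_mul_of_nonneg_left hb1 hc0) 2
    have h3 : (c*(1-c))^2 + (c*(2-c))^2 ≤ 1 := by
      nlinarith [sq_nonneg (1-c), mul_nonneg hc0 (sq_nonneg (1-c)),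
        mul_nonneg (mul_nonneg hc0 hc0) (sq_nonneg (1-c))]
    nlinarith
  have hEG : ((1-a)*c*a - b*(c*(1+b)))^2
      ≤ (1 - (1-a)^2 - b^2) * (1 - (c*a)^2 - (c*(1+b))^2) := by
    have key : (1 - (1-a)^2 - b^2) * (1 - (c*a)^2 - (c*(1+b))^2)
        - ((1-a)*c*a - b*(c*(1+b)))^2 = 2*a - a^2 - b^2 - 2*a*c^2*(1+b) := by ring
    have hbb : b*b ≤ a*b := mul_le_mul_of_nonneg_right hba hb0
    have hcb : c^2*b ≤ c^2*(1-c) := mul_le_mul_of_nonneg_left (by linarith) (sq_nonneg c)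
    have hbr : 2*c*(1-c)^2 ≤ 2 - a - b - 2*c^2 - 2*c^2*b := by nlinarith
    have hpos : 0 ≤ a * (2 - a - b - 2*c^2 - 2*c^2*b) := by
      apply mul_nonneg ha0
      nlinarith [mul_nonneg hc0 (sq_nonneg (1-c))]
    nlinarith
  have hq := quad_nonneg _ _ _ x y hE hG hEG
  have expand : ((1-a)*x + (-(c*a))*y)^2 + (b*x + c*(1+b)*y)^2
      = (x^2 + y^2) - ((1 - (1-a)^2 - b^2)*x^2
        + 2*((1-a)*c*a - b*(c*(1+b)))*x*y + (1 - (c*a)^2 - (c*(1+b))^2)*y^2) := by ring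
  have hmain : ((1-a)*x + (-(c*a))*y)^2 + (b*x + c*(1+b)*y)^2 ≤ 1^2 * (x^2 + y^2) := by
    rw [expand]; nlinarith
  calc (!![1 - a, -(c*a); b, c*(1+b)] 0 0 * x + !![1 - a, -(c*a); b, c*(1+b)] 0 1 * y)^2
        + (!![1 - a, -(c*a); b, c*(1+b)] 1 0 * x + !![1 - a, -(c*a); b, c*(1+b)] 1 1 * y)^2
      = ((1-a)*x + (-(c*a))*y)^2 + (b*x + c*(1+b)*y)^2 := by simp
    _ ≤ 1^2 * (x^2 + y^2) := hmain

def Pm (c : ℝ) : Matrix (Fin 2) (Fin 2) ℝ := !![-c, 1; 1, -1]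
def Qm (c : ℝ) : Matrix (Fin 2) (Fin 2) ℝ := !![1, 1; 1, c]

lemma QP (c : ℝ) : Qm c * Pm c = (1-c) • (1 : Matrix (Fin 2) (Fin 2) ℝ) := by
  ext i j
  fin_cases i <;> fin_cases j <;>
    simp [Qm, Pm, Matrix.mul_apply, Fin.sum_univ_two, Matrix.one_apply] <;> ring

lemma PQ (c : ℝ) : Pm c * Qm c = (1-c) • (1 : Matrix (Fin 2) (Fin 2) ℝ) := by
  ext i j
  fin_cases i <;> fin_cases j <;>
    simp [Qm, Pm, Matrix.mul_apply, Fin.sum_univ_two, Matrix.one_apply] <;> ring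

lemma Pm_norm_le (c : ℝ) (hc0 : 0 ≤ c) (hc1 : c ≤ 1) : specNorm (Pm c) ≤ 2 := by
  apply specNorm_le_of_bound _ _ (by norm_num)
  intro x y
  simp only [Pm]
  have : (-c*x + 1*y)^2 + (1*x + (-1)*y)^2 ≤ 2^2 * (x^2 + y^2) := by
    nlinarith [mul_nonneg (by linarith : (0:ℝ) ≤ 1 + c) (sq_nonneg (x+y)),
      mul_nonneg (by linarith : (0:ℝ) ≤ 1 - c) (sq_nonneg x),
      mul_nonneg (by linarith : (0:ℝ) ≤ 1 - c) (sq_nonneg y),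
      mul_nonneg hc0 (mul_nonneg (by linarith : (0:ℝ) ≤ 1 - c) (sq_nonneg x))]
  calc (!![-c, 1; 1, -1] 0 0 * x + !![-c, 1; 1, -1] 0 1 * y)^2
        + (!![-c, 1; 1, -1] 1 0 * x + !![-c, 1; 1, -1] 1 1 * y)^2
      = (-c*x + 1*y)^2 + (1*x + (-1)*y)^2 := by simp
    _ ≤ 2^2 * (x^2 + y^2) := this

lemma Qm_norm_le (c : ℝ) (hc0 : 0 ≤ c) (hc1 : c ≤ 1) : specNorm (Qm c) ≤ 2 := by
  apply specNorm_le_of_bound _ _ (by norm_num)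
  intro x y
  have : (1*x + 1*y)^2 + (1*x + c*y)^2 ≤ 2^2 * (x^2 + y^2) := by
    nlinarith [mul_nonneg (by linarith : (0:ℝ) ≤ 1 + c) (sq_nonneg (x-y)),
      mul_nonneg (by linarith : (0:ℝ) ≤ 1 - c) (sq_nonneg x),
      mul_nonneg (by linarith : (0:ℝ) ≤ 1 - c) (sq_nonneg y),
      mul_nonneg hc0 (mul_nonneg (by linarith : (0:ℝ) ≤ 1 - c) (sq_nonneg y))]
  calc (Qm c 0 0 * x + Qm c 0 1 * y)^2 + (Qm c 1 0 * x + Qm c 1 1 * y)^2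
      = (1*x + 1*y)^2 + (1*x + c*y)^2 := by simp [Qm]
    _ ≤ 2^2 * (x^2 + y^2) := this

lemma phi_mul (c : ℝ) (hc : c < 1) (X M : Matrix (Fin 2) (Fin 2) ℝ) :
    (1/(1-c)) • (Pm c * (X * M) * Qm c)
      = ((1/(1-c)) • (Pm c * X * Qm c)) * ((1/(1-c)) • (Pm c * M * Qm c)) := by
  have ht : (1:ℝ) - c ≠ 0 := by intro h; linarith
  rw [smul_mul_assoc, mul_smul_comm, smul_smul]
  have assoc : (Pm c * X * Qm c) * (Pm c * M * Qm c)
      = Pm c * X * (Qm c * Pm c) * M * Qm c := by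
    simp only [mul_assoc]
  rw [assoc, QP, mul_smul_comm, smul_mul_assoc, smul_mul_assoc, smul_smul]
  rw [mul_one]
  congr 1
  · field_simp
  · simp only [mul_assoc]

lemma phi_prod_le (c : ℝ) (hc0 : 0 ≤ c) (hc : c < 1) (l : List (Matrix (Fin 2) (Fin 2) ℝ))
    (h : ∀ X ∈ l, specNorm ((1/(1-c)) • (Pm c * X * Qm c)) ≤ 1) :
    specNorm ((1/(1-c)) • (Pm c * l.prod * Qm c)) ≤ 1 := by
  induction l with
  | nil =>
    have ht : (1:ℝ) - c ≠ 0 := by intro h'; linarith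
    have h1 : (1/(1-c)) • (Pm c * (1:Matrix (Fin 2) (Fin 2) ℝ) * Qm c) = 1 := by
      rw [mul_one, PQ, smul_smul]
      rw [show (1/(1-c)) * (1-c) = 1 by field_simp, one_smul]
    simp only [List.prod_nil, h1, specNorm_one, le_refl]
  | cons X l ih =>
    rw [List.prod_cons, phi_mul c hc]
    calc specNorm _ ≤ specNorm ((1/(1-c)) • (Pm c * X * Qm c)) *
          specNorm ((1/(1-c)) • (Pm c * l.prod * Qm c)) := specNorm_mul_le _ _
      _ ≤ 1 * 1 := by
          apply mul_le_mul (h X (by simp)) (ih (fun Y hY => h Y (by simp [hY])))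
            (specNorm_nonneg _) zero_le_one
      _ = 1 := by norm_num

lemma reconstruct (c : ℝ) (hc : c < 1) (M : Matrix (Fin 2) (Fin 2) ℝ) :
    M = (1/(1-c)) • (Qm c * ((1/(1-c)) • (Pm c * M * Qm c)) * Pm c) := by
  have ht : (1:ℝ) - c ≠ 0 := by intro h; linarith
  rw [mul_smul_comm, smul_mul_assoc, smul_smul]
  have assoc : Qm c * (Pm c * M * Qm c) * Pm c = (Qm c * Pm c) * M * (Qm c * Pm c) := by
    simp only [mul_assoc]
  rw [assoc, QP, smul_mul_assoc, mul_smul_comm, smul_smul, one_mul, mul_one, smul_smul]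
  rw [show (1:ℝ)/(1-c) * (1/(1-c)) * (1-c) * (1-c) = 1 by field_simp, one_smul]

end MomAux

open MomAux in
/-- For `c ∈ [0,1)`, `0 ≤ δ ≤ q` with `q > cδ`, any `k ≥ 1` and any
`μ_1, …, μ_k ∈ [0, (1−c)²/(q−cδ)]`, `‖A(μ_1) A(μ_2) ⋯ A(μ_k)‖ ≤ 4/(1−c)`. -/
theorem momentum_matrix_product_norm_bound
    (c δ q : ℝ) (hc0 : 0 ≤ c) (hc1 : c < 1) (hδ : 0 ≤ δ) (hδq : δ ≤ q) (hqcδ : c * δ < q)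
    (k : ℕ) (hk : 1 ≤ k) (μ : Fin k → ℝ)
    (hμ : ∀ i, 0 ≤ μ i ∧ μ i ≤ (1 - c) ^ 2 / (q - c * δ)) :
    specNorm (List.ofFn fun i : Fin k => Amat c δ q (μ i)).prod ≤ 4 / (1 - c) := by
  have ht : (0:ℝ) < 1 - c := by linarith
  have htne : (1:ℝ) - c ≠ 0 := ne_of_gt ht
  have hqd : 0 < q - c * δ := by linarith
  set M : Matrix (Fin 2) (Fin 2) ℝ := (List.ofFn fun i : Fin k => Amat c δ q (μ i)).prod
    with hMdef
  have hfac : ∀ X ∈ (List.ofFn fun i : Fin k => Amat c δ q (μ i)),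
      specNorm ((1/(1-c)) • (Pm c * X * Qm c)) ≤ 1 := by
    intro X hX
    rw [List.mem_ofFn] at hX
    obtain ⟨i, rfl⟩ := hX
    obtain ⟨hμ0, hμ1⟩ := hμ i
    set a : ℝ := μ i * (q - c*δ) / (1-c) with hadef
    set b : ℝ := μ i * (q - δ) / (1-c) with hbdef
    have hb0 : 0 ≤ b := div_nonneg (mul_nonneg hμ0 (by linarith)) (le_of_lt ht)
    have hba : b ≤ a := by
      rw [hadef, hbdef]
      have h1 : μ i * (q - δ) ≤ μ i * (q - c*δ) := by
        nlinarith [mul_nonneg (mul_nonneg hμ0 hδ) (le_of_lt ht)]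
      gcongr
    have hac : a ≤ 1 - c := by
      rw [hadef, div_le_iff₀ ht]
      have h2 : μ i * (q - c*δ) ≤ (1-c)^2 := (le_div_iff₀ hqd).mp hμ1
      nlinarith
    have key : (1/(1-c)) • (Pm c * Amat c δ q (μ i) * Qm c)
        = !![1 - a, -(c*a); b, c*(1+b)] := by
      rw [hadef, hbdef]
      ext i' j'
      fin_cases i' <;> fin_cases j' <;>
        simp [Pm, Qm, Amat, Matrix.mul_apply, Fin.sum_univ_two, Matrix.smul_apply] <;>
        field_simp <;> ring
    rw [key]
    exact Bmat_norm_le a b c hc0 hb0 hba hac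
  have hphi := phi_prod_le c hc0 hc1 _ hfac
  rw [← hMdef] at hphi
  calc specNorm M
      = specNorm ((1/(1-c)) • (Qm c * ((1/(1-c)) • (Pm c * M * Qm c)) * Pm c)) := by
        rw [← reconstruct c hc1 M]
    _ = |1/(1-c)| * specNorm (Qm c * ((1/(1-c)) • (Pm c * M * Qm c)) * Pm c) :=
        specNorm_smul _ _
    _ ≤ |1/(1-c)| * (2 * (1 * 2)) := by
        apply mul_le_mul_of_nonneg_left ?_ (abs_nonneg _)
        calc specNorm (Qm c * ((1/(1-c)) • (Pm c * M * Qm c)) * Pm c)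
            ≤ specNorm (Qm c * ((1/(1-c)) • (Pm c * M * Qm c))) * specNorm (Pm c) :=
              specNorm_mul_le _ _
          _ ≤ (specNorm (Qm c) * specNorm ((1/(1-c)) • (Pm c * M * Qm c))) * specNorm (Pm c) := by
              apply mul_le_mul_of_nonneg_right (specNorm_mul_le _ _) (specNorm_nonneg _)
          _ ≤ (2 * 1) * 2 := by
              apply mul_le_mul ?_ (Pm_norm_le c hc0 (le_of_lt hc1)) (specNorm_nonneg _)
                (by norm_num)
              exact mul_le_mul (Qm_norm_le c hc0 (le_of_lt hc1)) hphi (specNorm_nonneg _)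
                (by norm_num)
          _ = 2 * (1 * 2) := by ring
    _ = 4 / (1 - c) := by
        rw [abs_of_pos (by positivity : (0:ℝ) < 1/(1-c))]
        field_simp
        ring

end
end

section
/- Let c ∈ [0,1), 0 ≤ δ ≤ q with q > cδ. Then for any k ≥ 1 and any μ_1, …, μ_k ∈ [0, (1−c)²/(q−cδ)], applying the product of momentum matrices to the noise vector (δ, q)ᵀ gives ‖A(μ_1) A(μ_2) ⋯ A(μ_k) · (δ, q)ᵀ‖ ≤ 2√2·(q−cδ)/(1−c), where A(μ) = [[0, 1−δμ],[−c, 1+c−qμ]] and ‖·‖ is the Euclidean norm on ℝ². -/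
open Matrix Real

noncomputable section

/-- The Euclidean norm on `ℝ²` (vectors indexed by `Fin 2`). -/
def euclNorm2 (v : Fin 2 → ℝ) : ℝ := Real.sqrt (v 0 ^ 2 + v 1 ^ 2)

/-!
In the coordinates `u = y - c x`, `w = x - y` of a state `(x, y)`, and with `D = q - cδ`,
`r = q - δ`, one step `(x, y) ↦ A(μ) (x, y)` reads `(u, w) ↦ (u - μ D y, c w + μ r y)`, where
`(1 - c) y = u + c w`. For `μ D ≤ (1 - c)²` this map does not increase `r u² + D w²`, so the
ellipse `r u² + D w² ≤ r D (D + r)` through the starting point `(u, w) = (D, -r)` of the noise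
vector `(δ, q)` is invariant. By Cauchy–Schwarz, on that ellipse
`(1 - c)² (x² + y²) ≤ 2 (D + r)² ≤ 8 D²`.
-/

/-- The second conjunct only matters in the degenerate case `r = 0`, where the ellipse
collapses to the segment `w = 0`. -/
def InEllipse (D r u w : ℝ) : Prop :=
  r * u ^ 2 + D * w ^ 2 ≤ r * D * (D + r) ∧ u ^ 2 ≤ D * (D + r)

namespace InEllipse

variable {D r u w : ℝ}

theorem sq_add_le (hD : 0 < D) (hr : 0 ≤ r) (h : InEllipse D r u w) (a b : ℝ) :
    (a * u + b * w) ^ 2 ≤ (a ^ 2 * D + b ^ 2 * r) * (D + r) := by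
  obtain ⟨hQ, hu⟩ := h
  rcases hr.eq_or_lt with rfl | hr
  · have hw : w ^ 2 ≤ 0 := nonpos_of_mul_nonpos_right (by linarith) hD
    obtain rfl : w = 0 := by simpa using le_antisymm hw (sq_nonneg w)
    nlinarith [sq_nonneg a]
  · have hCS : r * D * (a * u + b * w) ^ 2 + (a * D * w - b * r * u) ^ 2 =
        (a ^ 2 * D + b ^ 2 * r) * (r * u ^ 2 + D * w ^ 2) := by ring
    have hcoef : 0 ≤ a ^ 2 * D + b ^ 2 * r := by positivity
    have : r * D * (a * u + b * w) ^ 2 ≤ r * D * ((a ^ 2 * D + b ^ 2 * r) * (D + r)) := by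
      nlinarith [sq_nonneg (a * D * w - b * r * u), mul_le_mul_of_nonneg_left hQ hcoef]
    exact le_of_mul_le_mul_left this (mul_pos hr hD)

theorem quadForm_step_le {c μ y : ℝ} (hc0 : 0 ≤ c) (hc1 : c < 1) (hD : 0 < D) (hr : 0 ≤ r)
    (hrD : r ≤ D) (hμ : 0 ≤ μ) (hμD : μ * D ≤ (1 - c) ^ 2) (hy : u + c * w = (1 - c) * y) :
    r * (u - μ * D * y) ^ 2 + D * (c * w + μ * r * y) ^ 2 ≤ r * u ^ 2 + D * w ^ 2 := by
  obtain rfl : u = (1 - c) * y - c * w := by linarith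
  have hμr : μ * r ≤ (1 - c) ^ 2 := (mul_le_mul_of_nonneg_left hrD hμ).trans hμD
  have hμr0 : 0 ≤ μ * r := mul_nonneg hμ hr
  have hdecrease : (1 - c) * (r * ((1 - c) * y - c * w) ^ 2 + D * w ^ 2 -
        (r * ((1 - c) * y - c * w - μ * D * y) ^ 2 + D * (c * w + μ * r * y) ^ 2)) =
      D * (2 * c * (μ * r) * ((1 - c) * y - w) ^ 2
        + ((1 - c) ^ 2 * (1 + c) - 2 * c * (μ * r)) * w ^ 2
        + (1 - c) * (2 * (1 - c) ^ 2 - μ * D - μ * r) * (μ * r) * y ^ 2) := by ring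
  have hcert : 0 ≤ 2 * c * (μ * r) * ((1 - c) * y - w) ^ 2
        + ((1 - c) ^ 2 * (1 + c) - 2 * c * (μ * r)) * w ^ 2
        + (1 - c) * (2 * (1 - c) ^ 2 - μ * D - μ * r) * (μ * r) * y ^ 2 := by
    have h2c : 2 * c * (μ * r) ≤ (1 - c) ^ 2 * (1 + c) := by nlinarith
    have hμsum : 0 ≤ 2 * (1 - c) ^ 2 - μ * D - μ * r := by linarith
    have := mul_nonneg (mul_nonneg (mul_nonneg (sub_nonneg.2 hc1.le) hμsum) hμr0) (sq_nonneg y)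
    have := mul_nonneg (sub_nonneg.2 h2c) (sq_nonneg w)
    have := mul_nonneg (mul_nonneg (mul_nonneg zero_le_two hc0) hμr0) (sq_nonneg ((1 - c) * y - w))
    linarith
  nlinarith [mul_nonneg hD.le hcert]

theorem step {c μ y : ℝ} (hc0 : 0 ≤ c) (hc1 : c < 1) (hD : 0 < D) (hr : 0 ≤ r) (hrD : r ≤ D)
    (hμ : 0 ≤ μ) (hμD : μ * D ≤ (1 - c) ^ 2) (hy : u + c * w = (1 - c) * y)
    (h : InEllipse D r u w) : InEllipse D r (u - μ * D * y) (c * w + μ * r * y) := by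
  refine ⟨(quadForm_step_le hc0 hc1 hD hr hrD hμ hμD hy).trans h.1, ?_⟩
  have hu' : (1 - c) * (u - μ * D * y) = (1 - c - μ * D) * u + -(μ * D * c) * w := by
    linear_combination (μ * D) * hy
  have hcoef : (1 - c - μ * D) ^ 2 * D + (-(μ * D * c)) ^ 2 * r ≤ (1 - c) ^ 2 * D := by
    have hμc : μ * (c ^ 2 * r) ≤ (1 - c) ^ 2 := by
      nlinarith [mul_le_mul_of_nonneg_left (pow_le_one₀ hc0 hc1.le : c ^ 2 ≤ 1) (mul_nonneg hμ hr)]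
    have hsmall : μ * D + μ * (c ^ 2 * r) ≤ 2 * (1 - c) := by nlinarith
    have : 0 ≤ μ * D ^ 2 * (2 * (1 - c) - (μ * D + μ * (c ^ 2 * r))) :=
      mul_nonneg (mul_nonneg hμ (sq_nonneg D)) (by linarith)
    nlinarith
  have hCS := h.sq_add_le hD hr (1 - c - μ * D) (-(μ * D * c))
  rw [← hu', mul_pow] at hCS
  have : (1 - c) ^ 2 * (u - μ * D * y) ^ 2 ≤ (1 - c) ^ 2 * (D * (D + r)) := by
    nlinarith [mul_le_mul_of_nonneg_right hcoef (by linarith : 0 ≤ D + r)]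
  exact le_of_mul_le_mul_left this (by positivity)

end InEllipse

theorem euclNorm2_le_of_inEllipse {c D r : ℝ} (hc0 : 0 ≤ c) (hc1 : c < 1) (hD : 0 < D)
    (hr : 0 ≤ r) (hrD : r ≤ D) {v : Fin 2 → ℝ} (h : InEllipse D r (v 1 - c * v 0) (v 0 - v 1)) :
    euclNorm2 v ≤ 2 * √2 * D / (1 - c) := by
  have hx : ((1 - c) * v 0) ^ 2 ≤ (D + r) ^ 2 := by
    have := h.sq_add_le hD hr 1 1
    convert this using 1 <;> ring
  have hy : ((1 - c) * v 1) ^ 2 ≤ (D + r) ^ 2 := by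
    have hCS := h.sq_add_le hD hr 1 c
    have : c ^ 2 * r ≤ r := mul_le_of_le_one_left hr (pow_le_one₀ hc0 hc1.le)
    calc ((1 - c) * v 1) ^ 2 = (1 * (v 1 - c * v 0) + c * (v 0 - v 1)) ^ 2 := by ring
      _ ≤ (1 ^ 2 * D + c ^ 2 * r) * (D + r) := hCS
      _ ≤ (D + r) ^ 2 := by nlinarith
  have hsum : v 0 ^ 2 + v 1 ^ 2 ≤ (2 * √2 * D / (1 - c)) ^ 2 := by
    rw [div_pow, mul_pow, mul_pow, sq_sqrt zero_le_two, le_div_iff₀ (by positivity)]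
    nlinarith
  exact sqrt_le_iff.2 ⟨by positivity, hsum⟩

theorem Amat_mulVec (c δ q μ : ℝ) (v : Fin 2 → ℝ) :
    Amat c δ q μ *ᵥ v = ![(1 - δ * μ) * v 1, -c * v 0 + (1 + c - q * μ) * v 1] := by
  ext i
  fin_cases i <;> simp [Amat, mulVec, dotProduct, Fin.sum_univ_two]

section Momentum

variable {c δ q : ℝ}

theorem inEllipse_Amat_mulVec (hc0 : 0 ≤ c) (hc1 : c < 1) (hδ : 0 ≤ δ) (hδq : δ ≤ q)
    (hqcδ : c * δ < q) {μ : ℝ} (hμ0 : 0 ≤ μ) (hμ : μ ≤ (1 - c) ^ 2 / (q - c * δ))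
    {v : Fin 2 → ℝ} (hv : InEllipse (q - c * δ) (q - δ) (v 1 - c * v 0) (v 0 - v 1)) :
    InEllipse (q - c * δ) (q - δ) ((Amat c δ q μ *ᵥ v) 1 - c * (Amat c δ q μ *ᵥ v) 0)
      ((Amat c δ q μ *ᵥ v) 0 - (Amat c δ q μ *ᵥ v) 1) := by
  have hD : 0 < q - c * δ := sub_pos.2 hqcδ
  have hrD : q - δ ≤ q - c * δ := by nlinarith
  have hstep := hv.step (y := v 1) hc0 hc1 hD (sub_nonneg.2 hδq) hrD hμ0
    ((le_div_iff₀ hD).1 hμ) (by ring)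
  rw [Amat_mulVec]
  convert hstep using 1 <;> simp only [cons_val_zero, cons_val_one] <;> ring

theorem inEllipse_prod_mulVec (hc0 : 0 ≤ c) (hc1 : c < 1) (hδ : 0 ≤ δ) (hδq : δ ≤ q)
    (hqcδ : c * δ < q) (l : List ℝ) (hl : ∀ μ ∈ l, 0 ≤ μ ∧ μ ≤ (1 - c) ^ 2 / (q - c * δ))
    {v : Fin 2 → ℝ} (hv : InEllipse (q - c * δ) (q - δ) (v 1 - c * v 0) (v 0 - v 1)) :
    InEllipse (q - c * δ) (q - δ)
      (((l.map (Amat c δ q)).prod *ᵥ v) 1 - c * ((l.map (Amat c δ q)).prod *ᵥ v) 0)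
      (((l.map (Amat c δ q)).prod *ᵥ v) 0 - ((l.map (Amat c δ q)).prod *ᵥ v) 1) := by
  induction l with
  | nil => simpa using hv
  | cons μ l ih =>
    obtain ⟨hμ0, hμ⟩ := hl μ List.mem_cons_self
    rw [List.map_cons, List.prod_cons, ← mulVec_mulVec]
    exact inEllipse_Amat_mulVec hc0 hc1 hδ hδq hqcδ hμ0 hμ
      (ih fun μ' hμ' => hl μ' (List.mem_cons_of_mem μ hμ'))

end Momentum

theorem inEllipse_self_neg {D r : ℝ} (hD : 0 ≤ D) (hr : 0 ≤ r) : InEllipse D r D (-r) :=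
  ⟨by nlinarith, by nlinarith [mul_nonneg hD hr]⟩

theorem momentum_matrix_product_noise_vector_bound_general
    (c δ q : ℝ) (hc0 : 0 ≤ c) (hc1 : c < 1) (hδ : 0 ≤ δ) (hδq : δ ≤ q) (hqcδ : c * δ < q)
    (k : ℕ) (μ : Fin k → ℝ)
    (hμ : ∀ i, 0 ≤ μ i ∧ μ i ≤ (1 - c) ^ 2 / (q - c * δ)) :
    euclNorm2 ((List.ofFn fun i : Fin k => Amat c δ q (μ i)).prod.mulVec ![δ, q]) ≤
      2 * Real.sqrt 2 * (q - c * δ) / (1 - c) := by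
  have hD : 0 < q - c * δ := sub_pos.2 hqcδ
  have hr : 0 ≤ q - δ := sub_nonneg.2 hδq
  have hnoise : InEllipse (q - c * δ) (q - δ) (q - c * δ) (-(q - δ)) := inEllipse_self_neg hD.le hr
  rw [show (List.ofFn fun i => Amat c δ q (μ i)) = (List.ofFn μ).map (Amat c δ q) by
    rw [List.map_ofFn]; rfl]
  refine euclNorm2_le_of_inEllipse hc0 hc1 hD hr (by nlinarith) ?_
  refine inEllipse_prod_mulVec hc0 hc1 hδ hδq hqcδ _ ?_ ?_
  · simpa [List.mem_ofFn] using hμ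
  · convert hnoise using 2 <;> simp

/-- For `c ∈ [0,1)`, `0 ≤ δ ≤ q` with `q > cδ`, any `k ≥ 1` and any
`μ_1, …, μ_k ∈ [0, (1−c)²/(q−cδ)]`,
`‖A(μ_1) ⋯ A(μ_k) · (δ, q)ᵀ‖ ≤ 2√2·(q−cδ)/(1−c)`. -/
theorem momentum_matrix_product_noise_vector_bound
    (c δ q : ℝ) (hc0 : 0 ≤ c) (hc1 : c < 1) (hδ : 0 ≤ δ) (hδq : δ ≤ q) (hqcδ : c * δ < q)
    (k : ℕ) (hk : 1 ≤ k) (μ : Fin k → ℝ)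
    (hμ : ∀ i, 0 ≤ μ i ∧ μ i ≤ (1 - c) ^ 2 / (q - c * δ)) :
    euclNorm2 ((List.ofFn fun i : Fin k => Amat c δ q (μ i)).prod.mulVec ![δ, q]) ≤
      2 * Real.sqrt 2 * (q - c * δ) / (1 - c) :=
  momentum_matrix_product_noise_vector_bound_general c δ q hc0 hc1 hδ hδq hqcδ k μ hμ

end
end

section
/- Let c ∈ [0,1), 0 ≤ δ ≤ q with q > cδ. Then for any k ≥ 1 and any μ_1, …, μ_k ∈ [0, (1−c)²/(q−cδ)], applying the product of momentum matrices to the bias vector (1, 1)ᵀ gives ‖A(μ_1) A(μ_2) ⋯ A(μ_k) · (1, 1)ᵀ‖ ≤ 2, where A(μ) = [[0, 1−δμ],[−c, 1+c−qμ]] and ‖·‖ is the Euclidean norm on ℝ². -/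
open Matrix Real

noncomputable section

/-!
The quadratic form `Φ(x, y) = (y − c x)² + (x − y)²` does not increase under any admissible
`A(μ)`: with `u = (q − cδ)μ` and `v = (q − δ)μ`, the decrease `Φ(w) − Φ(A(μ) w)` is a binary
quadratic form in `(y, x − y)`, and its discriminant condition
`c²(u + v)² ≤ (2u(1 − c) − u² − v²)(1 − c²)` holds whenever `0 ≤ v ≤ u ≤ (1 − c)²`.
Since `Φ(1, 1) = (1 − c)²`, every product applied to `(1, 1)` stays in the ellipse
`Φ ≤ (1 − c)²`, on which `x² ≤ 2` and `y² ≤ 2`.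
-/

theorem quadratic_form_nonneg_of_sq_le_mul {K : Type*} [Field K] [LinearOrder K]
    [IsStrictOrderedRing K] {a b c : K} (ha : 0 ≤ a) (hc : 0 ≤ c) (hb : b ^ 2 ≤ a * c)
    (x y : K) : 0 ≤ a * x ^ 2 + 2 * b * x * y + c * y ^ 2 := by
  rcases ha.eq_or_lt with rfl | ha
  · have hb0 : b = 0 := by nlinarith [sq_nonneg b]
    subst hb0
    nlinarith [sq_nonneg y]
  · have : 0 ≤ a * (a * x ^ 2 + 2 * b * x * y + c * y ^ 2) := by
      nlinarith [sq_nonneg (a * x + b * y), mul_nonneg (sub_nonneg.2 hb) (sq_nonneg y)]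
    exact nonneg_of_mul_nonneg_right this ha

def momentumPotential (c : ℝ) (w : Fin 2 → ℝ) : ℝ :=
  (w 1 - c * w 0) ^ 2 + (w 0 - w 1) ^ 2

theorem momentumPotential_one_one (c : ℝ) : momentumPotential c ![1, 1] = (1 - c) ^ 2 := by
  simp [momentumPotential]

theorem momentum_discriminant_le {c u v : ℝ} (hc0 : 0 ≤ c) (hc1 : c < 1) (hv : 0 ≤ v)
    (hvu : v ≤ u) (hu : u ≤ (1 - c) ^ 2) :
    c ^ 2 * (u + v) ^ 2 ≤ (2 * u * (1 - c) - u ^ 2 - v ^ 2) * (1 - c ^ 2) := by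
  have hu0 : 0 ≤ u := hv.trans hvu
  have hc2 : 0 ≤ 1 - c ^ 2 := by nlinarith
  -- the slack at `v = u`, plus the gain from lowering `v` below `u`
  have h_diag : 0 ≤ 2 * u * ((1 - c) ^ 2 - u) * (1 + c ^ 2) + 2 * u * c * (1 - c) ^ 3 := by
    have := sub_nonneg.2 hu
    have := sub_nonneg.2 hc1.le
    positivity
  have h_off : 0 ≤ (u - v) * ((u + v) * (1 - c ^ 2) + c ^ 2 * (3 * u + v)) :=
    mul_nonneg (sub_nonneg.2 hvu) (by positivity)
  linear_combination h_diag + h_off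

theorem momentumPotential_mulVec_le {c δ q μ : ℝ} (hc0 : 0 ≤ c) (hc1 : c < 1) (hδ : 0 ≤ δ)
    (hδq : δ ≤ q) (hμ0 : 0 ≤ μ) (hμ : μ * (q - c * δ) ≤ (1 - c) ^ 2) (w : Fin 2 → ℝ) :
    momentumPotential c (Amat c δ q μ *ᵥ w) ≤ momentumPotential c w := by
  set u := (q - c * δ) * μ
  set v := (q - δ) * μ
  have hdecrease : momentumPotential c w - momentumPotential c (Amat c δ q μ *ᵥ w) =
      (2 * u * (1 - c) - u ^ 2 - v ^ 2) * w 1 ^ 2 + 2 * (-(c * (u + v))) * w 1 * (w 0 - w 1)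
        + (1 - c ^ 2) * (w 0 - w 1) ^ 2 := by
    simp only [momentumPotential, Amat, mulVec_fin_two, of_apply, cons_val', cons_val_zero,
      cons_val_one, cons_val_fin_one, u, v]
    ring
  have hv : 0 ≤ v := mul_nonneg (sub_nonneg.2 hδq) hμ0
  have hvu : v ≤ u := by nlinarith [mul_nonneg (mul_nonneg hδ hμ0) (sub_nonneg.2 hc1.le)]
  have hu : u ≤ (1 - c) ^ 2 := by linarith [mul_comm μ (q - c * δ)]
  have hc2 : 0 ≤ 1 - c ^ 2 := by nlinarith
  have hP : 0 ≤ 2 * u * (1 - c) - u ^ 2 - v ^ 2 := by nlinarith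
  have hdisc : (-(c * (u + v))) ^ 2 ≤ (2 * u * (1 - c) - u ^ 2 - v ^ 2) * (1 - c ^ 2) := by
    rw [neg_sq, mul_pow]
    exact momentum_discriminant_le hc0 hc1 hv hvu hu
  linarith [quadratic_form_nonneg_of_sq_le_mul hP hc2 hdisc (w 1) (w 0 - w 1)]

theorem apply_list_prod_mulVec_le {n R α : Type*} [Fintype n] [DecidableEq n] [Semiring R]
    [Preorder α] {f : (n → R) → α} {l : List (Matrix n n R)}
    (hl : ∀ M ∈ l, ∀ w, f (M *ᵥ w) ≤ f w) (w : n → R) : f (l.prod *ᵥ w) ≤ f w := by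
  induction l with
  | nil => simp
  | cons M l ih =>
    rw [List.prod_cons, ← mulVec_mulVec]
    exact (hl M List.mem_cons_self _).trans (ih fun N hN => hl N (List.mem_cons_of_mem M hN))

theorem euclNorm2_le_two_of_momentumPotential_le {c : ℝ} (hc0 : 0 ≤ c) (hc1 : c < 1)
    {w : Fin 2 → ℝ} (hw : momentumPotential c w ≤ (1 - c) ^ 2) : euclNorm2 w ≤ 2 := by
  set a := w 1 - c * w 0
  set b := w 0 - w 1
  have hc2 : 0 ≤ 1 - c ^ 2 := by nlinarith
  have hw' : (1 - c) ^ 2 * (w 0 ^ 2 + w 1 ^ 2) ≤ (1 - c) ^ 2 * 2 ^ 2 :=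
    calc (1 - c) ^ 2 * (w 0 ^ 2 + w 1 ^ 2) = (a + b) ^ 2 + (a + c * b) ^ 2 := by ring
      _ ≤ 4 * (a ^ 2 + b ^ 2) := by
        nlinarith [sq_nonneg (a - b), sq_nonneg (c * a - b), mul_nonneg hc2 (sq_nonneg a),
          mul_nonneg hc2 (sq_nonneg b)]
      _ ≤ (1 - c) ^ 2 * 2 ^ 2 := by unfold momentumPotential at hw; linarith
  exact (sqrt_le_left zero_le_two).2 (le_of_mul_le_mul_left hw' (by nlinarith))

theorem momentum_matrix_product_bias_vector_bound_general
    (c δ q : ℝ) (hc0 : 0 ≤ c) (hc1 : c < 1) (hδ : 0 ≤ δ) (hδq : δ ≤ q)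
    (k : ℕ) (μ : Fin k → ℝ)
    (hμ : ∀ i, 0 ≤ μ i ∧ μ i ≤ (1 - c) ^ 2 / (q - c * δ)) :
    euclNorm2 ((List.ofFn fun i : Fin k => Amat c δ q (μ i)).prod.mulVec ![1, 1]) ≤ 2 := by
  have hgap : 0 ≤ q - c * δ := by nlinarith
  refine euclNorm2_le_two_of_momentumPotential_le hc0 hc1 ?_
  rw [← momentumPotential_one_one c]
  refine apply_list_prod_mulVec_le (fun M hM => ?_) _
  obtain ⟨i, rfl⟩ := List.mem_ofFn.1 hM
  exact momentumPotential_mulVec_le hc0 hc1 hδ hδq (hμ i).1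
    (mul_le_of_le_div₀ (sq_nonneg _) hgap (hμ i).2)

/-- For `c ∈ [0,1)`, `0 ≤ δ ≤ q` with `q > cδ`, any `k ≥ 1` and any
`μ_1, …, μ_k ∈ [0, (1−c)²/(q−cδ)]`, `‖A(μ_1) ⋯ A(μ_k) · (1, 1)ᵀ‖ ≤ 2`. -/
theorem momentum_matrix_product_bias_vector_bound
    (c δ q : ℝ) (hc0 : 0 ≤ c) (hc1 : c < 1) (hδ : 0 ≤ δ) (hδq : δ ≤ q) (hqcδ : c * δ < q)
    (k : ℕ) (hk : 1 ≤ k) (μ : Fin k → ℝ)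
    (hμ : ∀ i, 0 ≤ μ i ∧ μ i ≤ (1 - c) ^ 2 / (q - c * δ)) :
    euclNorm2 ((List.ofFn fun i : Fin k => Amat c δ q (μ i)).prod.mulVec ![1, 1]) ≤ 2 :=
  momentum_matrix_product_bias_vector_bound_general c δ q hc0 hc1 hδ hδq k μ hμ
end
end
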